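/- arXiv:1505.01252 — 5 statements merged into one kernel-verified Lean document; each statement's English description precedes it below -/
import Mathlib

section
/- Let E be a Banach space, T > 0 and 0 < σ < β ≤ 1. Then the weighted Hölder space F^{β,σ}((0,T];E), equipped with the norm ‖f‖_{F^{β,σ}} = sup_{0<t≤T} t^{1-β} ‖f(t)‖ + sup_{0<s<t≤T} s^{1-β+σ} ‖f(t) - f(s)‖ / (t-s)^σ, is a Banach space: every Cauchy sequence in this norm converges in this norm to an element of F^{β,σ}((0,T];E). -/
open MeasureTheory Set Filter

/-- The weighted Hölder norm
`‖f‖_{F^{β,σ}} = sup_{0<t≤T} t^{1-β} ‖f(t)‖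
  + sup_{0<s<t≤T} s^{1-β+σ} ‖f(t) - f(s)‖ / (t-s)^σ`. -/
noncomputable def weightedHolderNorm {E : Type*} [NormedAddCommGroup E]
    (T β σ : ℝ) (f : ℝ → E) : ℝ :=
  sSup ((fun t : ℝ => t ^ (1 - β) * ‖f t‖) '' Set.Ioc 0 T) +
    sSup {x : ℝ | ∃ s t : ℝ, 0 < s ∧ s < t ∧ t ≤ T ∧
      x = s ^ (1 - β + σ) * ‖f t - f s‖ / (t - s) ^ σ}

/-- Membership in the weighted Hölder space `F^{β,σ}((0,T];E)`:
(i) `f` is continuous on `(0,T]` and `t^{1-β} f(t)` has a limit as `t → 0+`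
(for `β = 1` this says that `f` extends continuously to `[0,T]`);
(ii) the weighted Hölder seminorm is finite;
(iii) `w_f(t) = sup_{0≤s<t} s^{1-β+σ} ‖f(t)-f(s)‖/(t-s)^σ → 0` as `t → 0+`. -/
def MemWeightedHolder {E : Type*} [NormedAddCommGroup E] [NormedSpace ℝ E]
    (T β σ : ℝ) (f : ℝ → E) : Prop :=
  ContinuousOn f (Set.Ioc 0 T) ∧
  (∃ L : E, Tendsto (fun t : ℝ => t ^ (1 - β) • f t) (nhdsWithin 0 (Set.Ioi 0)) (nhds L)) ∧
  BddAbove {x : ℝ | ∃ s t : ℝ, 0 < s ∧ s < t ∧ t ≤ T ∧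
      x = s ^ (1 - β + σ) * ‖f t - f s‖ / (t - s) ^ σ} ∧
  Tendsto (fun t : ℝ =>
      sSup ({0} ∪ {x : ℝ | ∃ s : ℝ, 0 < s ∧ s < t ∧
        x = s ^ (1 - β + σ) * ‖f t - f s‖ / (t - s) ^ σ}))
    (nhdsWithin 0 (Set.Ioi 0)) (nhds 0)

section Aux
variable {E : Type*} [NormedAddCommGroup E]

def whS1 (T β : ℝ) (f : ℝ → E) : Set ℝ := (fun t : ℝ => t ^ (1 - β) * ‖f t‖) '' Set.Ioc 0 T

def whS2 (T β σ : ℝ) (f : ℝ → E) : Set ℝ :=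
  {x : ℝ | ∃ s t : ℝ, 0 < s ∧ s < t ∧ t ≤ T ∧
      x = s ^ (1 - β + σ) * ‖f t - f s‖ / (t - s) ^ σ}

lemma whNorm_def (T β σ : ℝ) (f : ℝ → E) :
    weightedHolderNorm T β σ f = sSup (whS1 T β f) + sSup (whS2 T β σ f) := rfl

lemma whS1_nonneg {T β : ℝ} {f : ℝ → E} : ∀ x ∈ whS1 T β f, 0 ≤ x := by
  rintro x ⟨t, ht, rfl⟩
  exact mul_nonneg (Real.rpow_nonneg ht.1.le _) (norm_nonneg _)

lemma whS2_nonneg {T β σ : ℝ} {f : ℝ → E} : ∀ x ∈ whS2 T β σ f, 0 ≤ x := by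
  rintro x ⟨s, t, hs, hst, htT, rfl⟩
  exact div_nonneg (mul_nonneg (Real.rpow_nonneg hs.le _) (norm_nonneg _))
    (Real.rpow_nonneg (by linarith) _)

lemma sSup_whS1_nonneg (T β : ℝ) (f : ℝ → E) : 0 ≤ sSup (whS1 T β f) :=
  Real.sSup_nonneg whS1_nonneg

lemma sSup_whS2_nonneg (T β σ : ℝ) (f : ℝ → E) : 0 ≤ sSup (whS2 T β σ f) :=
  Real.sSup_nonneg whS2_nonneg

lemma whNorm_nonneg (T β σ : ℝ) (f : ℝ → E) : 0 ≤ weightedHolderNorm T β σ f :=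
  add_nonneg (sSup_whS1_nonneg T β f) (sSup_whS2_nonneg T β σ f)

lemma whS1_sub_le {T β : ℝ} {p q : ℝ → E} (hp : BddAbove (whS1 T β p))
    (hq : BddAbove (whS1 T β q)) :
    ∀ x ∈ whS1 T β (fun t => p t - q t), x ≤ sSup (whS1 T β p) + sSup (whS1 T β q) := by
  rintro x ⟨t, ht, rfl⟩
  have h1 : t ^ (1 - β) * ‖p t‖ ≤ sSup (whS1 T β p) := le_csSup hp ⟨t, ht, rfl⟩
  have h2 : t ^ (1 - β) * ‖q t‖ ≤ sSup (whS1 T β q) := le_csSup hq ⟨t, ht, rfl⟩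
  have htri := norm_sub_le (p t) (q t)
  have hpow : (0:ℝ) ≤ t ^ (1 - β) := Real.rpow_nonneg ht.1.le _
  calc t ^ (1 - β) * ‖p t - q t‖ ≤ t ^ (1 - β) * (‖p t‖ + ‖q t‖) :=
        mul_le_mul_of_nonneg_left htri hpow
    _ = t ^ (1 - β) * ‖p t‖ + t ^ (1 - β) * ‖q t‖ := by ring
    _ ≤ sSup (whS1 T β p) + sSup (whS1 T β q) := add_le_add h1 h2

lemma whS1_sub_bdd {T β : ℝ} {p q : ℝ → E} (hp : BddAbove (whS1 T β p))
    (hq : BddAbove (whS1 T β q)) : BddAbove (whS1 T β (fun t => p t - q t)) :=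
  ⟨_, whS1_sub_le hp hq⟩

lemma whS2_sub_le {T β σ : ℝ} {p q : ℝ → E} (hp : BddAbove (whS2 T β σ p))
    (hq : BddAbove (whS2 T β σ q)) :
    ∀ x ∈ whS2 T β σ (fun t => p t - q t),
      x ≤ sSup (whS2 T β σ p) + sSup (whS2 T β σ q) := by
  rintro x ⟨s, t, hs, hst, htT, rfl⟩
  have h1 : s ^ (1 - β + σ) * ‖p t - p s‖ / (t - s) ^ σ ≤ sSup (whS2 T β σ p) :=
    le_csSup hp ⟨s, t, hs, hst, htT, rfl⟩
  have h2 : s ^ (1 - β + σ) * ‖q t - q s‖ / (t - s) ^ σ ≤ sSup (whS2 T β σ q) :=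
    le_csSup hq ⟨s, t, hs, hst, htT, rfl⟩
  have htri : ‖(p t - q t) - (p s - q s)‖ ≤ ‖p t - p s‖ + ‖q t - q s‖ := by
    have h : (p t - q t) - (p s - q s) = (p t - p s) - (q t - q s) := by abel
    rw [h]; exact norm_sub_le _ _
  have hpow : (0:ℝ) ≤ s ^ (1 - β + σ) := Real.rpow_nonneg hs.le _
  have hden : (0:ℝ) < (t - s) ^ σ := Real.rpow_pos_of_pos (by linarith) _
  calc s ^ (1 - β + σ) * ‖(p t - q t) - (p s - q s)‖ / (t - s) ^ σ
      ≤ s ^ (1 - β + σ) * (‖p t - p s‖ + ‖q t - q s‖) / (t - s) ^ σ := by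
        gcongr
    _ = s ^ (1 - β + σ) * ‖p t - p s‖ / (t - s) ^ σ
        + s ^ (1 - β + σ) * ‖q t - q s‖ / (t - s) ^ σ := by ring
    _ ≤ sSup (whS2 T β σ p) + sSup (whS2 T β σ q) := add_le_add h1 h2

lemma whS2_sub_bdd {T β σ : ℝ} {p q : ℝ → E} (hp : BddAbove (whS2 T β σ p))
    (hq : BddAbove (whS2 T β σ q)) : BddAbove (whS2 T β σ (fun t => p t - q t)) :=
  ⟨_, whS2_sub_le hp hq⟩

lemma el_le_whNorm1 {T β σ : ℝ} {u : ℝ → E} (hb : BddAbove (whS1 T β u)) {t : ℝ}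
    (ht : t ∈ Set.Ioc 0 T) : t ^ (1 - β) * ‖u t‖ ≤ weightedHolderNorm T β σ u := by
  rw [whNorm_def]
  exact le_add_of_le_of_nonneg (le_csSup hb ⟨t, ht, rfl⟩) (sSup_whS2_nonneg T β σ u)

lemma el_le_whNorm2 {T β σ : ℝ} {u : ℝ → E} (hb : BddAbove (whS2 T β σ u)) {s t : ℝ}
    (hs : 0 < s) (hst : s < t) (htT : t ≤ T) :
    s ^ (1 - β + σ) * ‖u t - u s‖ / (t - s) ^ σ ≤ weightedHolderNorm T β σ u := by
  rw [whNorm_def]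
  exact le_add_of_nonneg_of_le (sSup_whS1_nonneg T β u)
    (le_csSup hb ⟨s, t, hs, hst, htT, rfl⟩)

end Aux

section Aux2
variable {E : Type*} [NormedAddCommGroup E] [NormedSpace ℝ E]

lemma norm_rpow_smul {β : ℝ} {t : ℝ} (ht : 0 < t) (v : E) :
    ‖t ^ (1 - β) • v‖ = t ^ (1 - β) * ‖v‖ := by
  rw [norm_smul, Real.norm_eq_abs, abs_of_nonneg (Real.rpow_nonneg ht.le _)]

lemma mem_bddAbove_whS1 {T β σ : ℝ} (hT : 0 < T) {f : ℝ → E}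
    (hf : MemWeightedHolder T β σ f) : BddAbove (whS1 T β f) := by
  obtain ⟨hcont, ⟨L, hL⟩, -, -⟩ := hf
  have hev : ∀ᶠ t in nhdsWithin 0 (Set.Ioi 0), ‖t ^ (1 - β) • f t‖ < ‖L‖ + 1 := by
    have := hL.norm
    exact this.eventually_lt_const (lt_add_one ‖L‖)
  obtain ⟨δ, hδ0, hδ⟩ := mem_nhdsGT_iff_exists_Ioo_subset.1 hev
  have hδ0' : (0:ℝ) < δ := hδ0
  have hc : ContinuousOn (fun t : ℝ => t ^ (1 - β) * ‖f t‖) (Set.Icc δ T) := by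
    have hsub : Set.Icc δ T ⊆ Set.Ioc 0 T := fun x hx => ⟨lt_of_lt_of_le hδ0' hx.1, hx.2⟩
    exact (continuousOn_id.rpow_const fun x hx =>
      Or.inl (ne_of_gt (lt_of_lt_of_le hδ0' hx.1))).mul (hcont.mono hsub).norm
  obtain ⟨M, hM⟩ := (isCompact_Icc.image_of_continuousOn hc).bddAbove
  refine ⟨max (‖L‖ + 1) M, ?_⟩
  rintro x ⟨t, ht, rfl⟩
  by_cases h : t < δ
  · have : t ∈ Set.Ioo (0:ℝ) δ := ⟨ht.1, h⟩
    have := hδ this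
    have heq := norm_rpow_smul (β := β) ht.1 (f t)
    simp only [Set.mem_setOf_eq] at this
    exact le_max_of_le_left (by simp only []; rw [← heq]; exact this.le)
  · push_neg at h
    exact le_max_of_le_right (hM ⟨t, ⟨h, ht.2⟩, rfl⟩)

end Aux2

/-- The weighted Hölder space `F^{β,σ}((0,T];E)` with its natural norm is a Banach space:
every Cauchy sequence converges in the norm to an element of the space. -/
theorem weightedHolder_complete {E : Type*} [NormedAddCommGroup E] [NormedSpace ℝ E]
    [CompleteSpace E] (T β σ : ℝ) (hT : 0 < T) (hσ : 0 < σ) (hσβ : σ < β) (hβ : β ≤ 1)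
    (f : ℕ → ℝ → E) (hf : ∀ n, MemWeightedHolder T β σ (f n))
    (hcauchy : ∀ ε : ℝ, 0 < ε → ∃ N : ℕ, ∀ m ≥ N, ∀ n ≥ N,
      weightedHolderNorm T β σ (fun t => f m t - f n t) < ε) :
    ∃ g : ℝ → E, MemWeightedHolder T β σ g ∧
      Tendsto (fun n => weightedHolderNorm T β σ (fun t => f n t - g t)) atTop (nhds 0) := by
  classical
  have hb1 : ∀ n, BddAbove (whS1 T β (f n)) := fun n => mem_bddAbove_whS1 hT (hf n)
  have hb2 : ∀ n, BddAbove (whS2 T β σ (f n)) := fun n => (hf n).2.2.1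
  -- pointwise bounds by the norm
  have key : ∀ m n : ℕ, ∀ t ∈ Set.Ioc (0:ℝ) T, t ^ (1 - β) * ‖f m t - f n t‖ ≤
      weightedHolderNorm T β σ (fun u => f m u - f n u) := fun m n t ht =>
    el_le_whNorm1 (whS1_sub_bdd (hb1 m) (hb1 n)) ht
  have key2 : ∀ m n : ℕ, ∀ s t : ℝ, 0 < s → s < t → t ≤ T →
      s ^ (1 - β + σ) * ‖(f m t - f n t) - (f m s - f n s)‖ / (t - s) ^ σ ≤
      weightedHolderNorm T β σ (fun u => f m u - f n u) := fun m n s t hs hst htT =>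
    el_le_whNorm2 (whS2_sub_bdd (hb2 m) (hb2 n)) hs hst htT
  -- pointwise Cauchy and limit g
  have hptC : ∀ t ∈ Set.Ioc (0:ℝ) T, CauchySeq (fun n => f n t) := by
    intro t ht
    rw [Metric.cauchySeq_iff]
    intro ε hε
    have hpow : (0:ℝ) < t ^ (1 - β) := Real.rpow_pos_of_pos ht.1 _
    obtain ⟨N, hN⟩ := hcauchy (ε * t ^ (1 - β)) (by positivity)
    refine ⟨N, fun m hm n hn => ?_⟩
    rw [dist_eq_norm]
    have h1 := (key m n t ht).trans_lt (hN m hm n hn)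
    nlinarith [norm_nonneg (f m t - f n t)]
  set g : ℝ → E := fun t => limUnder atTop (fun n => f n t) with hgdef
  have hgl : ∀ t ∈ Set.Ioc (0:ℝ) T, Tendsto (fun n => f n t) atTop (nhds (g t)) :=
    fun t ht => (hptC t ht).tendsto_limUnder
  -- uniform estimates on the difference with g
  have hC : ∀ ε : ℝ, 0 < ε → ∃ N : ℕ, ∀ m ≥ N,
      (∀ t ∈ Set.Ioc (0:ℝ) T, t ^ (1 - β) * ‖f m t - g t‖ ≤ ε) ∧
      (∀ s t : ℝ, 0 < s → s < t → t ≤ T →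
        s ^ (1 - β + σ) * ‖(f m t - g t) - (f m s - g s)‖ / (t - s) ^ σ ≤ ε) := by
    intro ε hε
    obtain ⟨N, hN⟩ := hcauchy ε hε
    refine ⟨N, fun m hm => ⟨?_, ?_⟩⟩
    · intro t ht
      have hlim : Tendsto (fun n => t ^ (1 - β) * ‖f m t - f n t‖) atTop
          (nhds (t ^ (1 - β) * ‖f m t - g t‖)) :=
        ((tendsto_const_nhds.sub (hgl t ht)).norm).const_mul _
      refine le_of_tendsto hlim ?_
      filter_upwards [eventually_ge_atTop N] with n hn
      exact (key m n t ht).trans (hN m hm n hn).le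
    · intro s t hs hst htT
      have hsmem : s ∈ Set.Ioc (0:ℝ) T := ⟨hs, le_of_lt (lt_of_lt_of_le hst htT)⟩
      have htmem : t ∈ Set.Ioc (0:ℝ) T := ⟨lt_trans hs hst, htT⟩
      have hlim : Tendsto
          (fun n => s ^ (1 - β + σ) * ‖(f m t - f n t) - (f m s - f n s)‖ / (t - s) ^ σ)
          atTop
          (nhds (s ^ (1 - β + σ) * ‖(f m t - g t) - (f m s - g s)‖ / (t - s) ^ σ)) := by
        apply Tendsto.div_const
        exact (((tendsto_const_nhds.sub (hgl t htmem)).sub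
          (tendsto_const_nhds.sub (hgl s hsmem))).norm).const_mul _
      refine le_of_tendsto hlim ?_
      filter_upwards [eventually_ge_atTop N] with n hn
      exact (key2 m n s t hs hst htT).trans (hN m hm n hn).le
  -- convergence in norm
  have hD : Tendsto (fun n => weightedHolderNorm T β σ (fun t => f n t - g t)) atTop
      (nhds 0) := by
    rw [Metric.tendsto_atTop]
    intro ε hε
    obtain ⟨N, hN⟩ := hC (ε / 3) (by linarith)
    refine ⟨N, fun m hm => ?_⟩
    have h1 : sSup (whS1 T β (fun t => f m t - g t)) ≤ ε / 3 :=
      Real.sSup_le (by rintro x ⟨t, ht, rfl⟩; exact (hN m hm).1 t ht) (by linarith)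
    have h2 : sSup (whS2 T β σ (fun t => f m t - g t)) ≤ ε / 3 := by
      apply Real.sSup_le ?_ (by linarith)
      rintro x ⟨s, t, hs, hst, htT, rfl⟩
      exact (hN m hm).2 s t hs hst htT
    have hnn := whNorm_nonneg T β σ (fun t => f m t - g t)
    rw [Real.dist_eq, sub_zero, abs_of_nonneg hnn, whNorm_def]
    rw [whNorm_def] at hnn
    linarith
  -- continuity of g on (0, T]
  have hrpow_cont : ContinuousOn (fun t : ℝ => t ^ (1 - β)) (Set.Ioc 0 T) :=
    continuousOn_id.rpow_const fun t ht => Or.inl (ne_of_gt ht.1)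
  have hunif : TendstoUniformlyOn (fun n t => t ^ (1 - β) • f n t)
      (fun t => t ^ (1 - β) • g t) atTop (Set.Ioc 0 T) := by
    rw [Metric.tendstoUniformlyOn_iff]
    intro ε hε
    obtain ⟨N, hN⟩ := hC (ε / 2) (by linarith)
    filter_upwards [eventually_ge_atTop N] with n hn t ht
    rw [dist_eq_norm, ← smul_sub, norm_rpow_smul ht.1, norm_sub_rev]
    exact lt_of_le_of_lt ((hN n hn).1 t ht) (by linarith)
  have hGcont : ContinuousOn (fun t : ℝ => t ^ (1 - β) • g t) (Set.Ioc 0 T) :=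
    hunif.continuousOn (Frequently.of_forall fun n => hrpow_cont.smul (hf n).1)
  have hgcont : ContinuousOn g (Set.Ioc 0 T) := by
    have heq : ∀ t ∈ Set.Ioc (0:ℝ) T, (fun u : ℝ => u ^ (β - 1) • (u ^ (1 - β) • g u)) t
        = g t := by
      intro t ht
      simp only [smul_smul]
      rw [← Real.rpow_add ht.1]
      norm_num
    have hcont2 : ContinuousOn (fun u : ℝ => u ^ (β - 1) • (u ^ (1 - β) • g u))
        (Set.Ioc 0 T) :=
      (continuousOn_id.rpow_const fun t ht => Or.inl (ne_of_gt ht.1)).smul hGcont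
    exact hcont2.congr fun t ht => (heq t ht).symm
  -- limit at 0+
  choose Ls hLs using fun n => (hf n).2.1
  have hLcauchy : CauchySeq Ls := by
    rw [Metric.cauchySeq_iff]
    intro ε hε
    obtain ⟨N, hN⟩ := hcauchy (ε / 2) (by linarith)
    refine ⟨N, fun m hm n hn => ?_⟩
    rw [dist_eq_norm]
    have hlim : Tendsto (fun t : ℝ => ‖t ^ (1 - β) • f m t - t ^ (1 - β) • f n t‖)
        (nhdsWithin 0 (Set.Ioi 0)) (nhds ‖Ls m - Ls n‖) := ((hLs m).sub (hLs n)).norm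
    have hle : ‖Ls m - Ls n‖ ≤ ε / 2 := by
      refine le_of_tendsto hlim ?_
      filter_upwards [Ioc_mem_nhdsGT_of_mem (⟨le_refl (0:ℝ), hT⟩ : (0:ℝ) ∈ Set.Ico 0 T)]
        with t ht
      rw [← smul_sub, norm_rpow_smul ht.1]
      exact (key m n t ht).trans (hN m hm n hn).le
    linarith
  obtain ⟨L, hL⟩ := cauchySeq_tendsto_of_complete hLcauchy
  have hGlim : Tendsto (fun t : ℝ => t ^ (1 - β) • g t) (nhdsWithin 0 (Set.Ioi 0))
      (nhds L) := by
    rw [Metric.tendsto_nhds]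
    intro ε hε
    obtain ⟨N, hN⟩ := hC (ε / 3) (by linarith)
    obtain ⟨n, hn1, hn2⟩ :=
      ((hL.eventually (Metric.ball_mem_nhds L (show (0:ℝ) < ε / 3 by linarith))).and
        (eventually_ge_atTop N)).exists
    filter_upwards [Ioc_mem_nhdsGT_of_mem (⟨le_refl (0:ℝ), hT⟩ : (0:ℝ) ∈ Set.Ico 0 T),
      (hLs n).eventually (Metric.ball_mem_nhds (Ls n) (show (0:ℝ) < ε / 3 by linarith))]
      with t ht h3
    have d1 : dist (t ^ (1 - β) • g t) (t ^ (1 - β) • f n t) ≤ ε / 3 := by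
      rw [dist_eq_norm, ← smul_sub, norm_rpow_smul ht.1, norm_sub_rev]
      exact (hN n hn2).1 t ht
    have d2 : dist (t ^ (1 - β) • f n t) (Ls n) < ε / 3 := Metric.mem_ball.1 h3
    have d3 : dist (Ls n) L < ε / 3 := Metric.mem_ball.1 hn1
    calc dist (t ^ (1 - β) • g t) L
        ≤ dist (t ^ (1 - β) • g t) (t ^ (1 - β) • f n t)
          + dist (t ^ (1 - β) • f n t) (Ls n) + dist (Ls n) L := dist_triangle4 _ _ _ _
      _ < ε := by linarith
  -- Hölder seminorm set of g is bounded
  have hdecomp : ∀ (N : ℕ) (s t : ℝ), ‖g t - g s‖ ≤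
      ‖f N t - f N s‖ + ‖(f N t - g t) - (f N s - g s)‖ := by
    intro N s t
    have h : g t - g s = (f N t - f N s) - ((f N t - g t) - (f N s - g s)) := by abel
    rw [h]; exact norm_sub_le _ _
  have hquot : ∀ (N : ℕ) (s t : ℝ), 0 < s → s < t →
      s ^ (1 - β + σ) * ‖g t - g s‖ / (t - s) ^ σ ≤
      s ^ (1 - β + σ) * ‖f N t - f N s‖ / (t - s) ^ σ
        + s ^ (1 - β + σ) * ‖(f N t - g t) - (f N s - g s)‖ / (t - s) ^ σ := by
    intro N s t hs hst
    have hpow : (0:ℝ) ≤ s ^ (1 - β + σ) := Real.rpow_nonneg hs.le _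
    have hden : (0:ℝ) < (t - s) ^ σ := Real.rpow_pos_of_pos (by linarith) _
    rw [← add_div]
    gcongr
    calc s ^ (1 - β + σ) * ‖g t - g s‖
        ≤ s ^ (1 - β + σ) * (‖f N t - f N s‖ + ‖(f N t - g t) - (f N s - g s)‖) :=
          mul_le_mul_of_nonneg_left (hdecomp N s t) hpow
      _ = _ := by ring
  have hgbdd2 : BddAbove (whS2 T β σ g) := by
    obtain ⟨N, hN⟩ := hC 1 one_pos
    refine ⟨sSup (whS2 T β σ (f N)) + 1, ?_⟩
    rintro x ⟨s, t, hs, hst, htT, rfl⟩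
    refine (hquot N s t hs hst).trans (add_le_add ?_ ?_)
    · exact le_csSup (hb2 N) ⟨s, t, hs, hst, htT, rfl⟩
    · exact (hN N le_rfl).2 s t hs hst htT
  -- vanishing of the modulus w_g at 0+
  have hwg : Tendsto (fun t : ℝ =>
      sSup ({0} ∪ {x : ℝ | ∃ s : ℝ, 0 < s ∧ s < t ∧
        x = s ^ (1 - β + σ) * ‖g t - g s‖ / (t - s) ^ σ}))
      (nhdsWithin 0 (Set.Ioi 0)) (nhds 0) := by
    rw [Metric.tendsto_nhds]
    intro ε hε
    obtain ⟨N, hN⟩ := hC (ε / 3) (by linarith)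
    have hwN := (hf N).2.2.2
    have hev := (Metric.tendsto_nhds.1 hwN) (ε / 3) (by linarith)
    filter_upwards [hev, Ioc_mem_nhdsGT_of_mem (⟨le_refl (0:ℝ), hT⟩ : (0:ℝ) ∈ Set.Ico 0 T)]
      with t hwt ht
    have hWNb : BddAbove ({0} ∪ {x : ℝ | ∃ s : ℝ, 0 < s ∧ s < t ∧
        x = s ^ (1 - β + σ) * ‖f N t - f N s‖ / (t - s) ^ σ}) := by
      refine ⟨max 0 (sSup (whS2 T β σ (f N))), ?_⟩
      rintro x (hx | ⟨s, hs, hst, rfl⟩)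
      · rw [Set.mem_singleton_iff] at hx; subst hx; exact le_max_left _ _
      · exact le_max_of_le_right (le_csSup (hb2 N) ⟨s, t, hs, hst, ht.2, rfl⟩)
    have hwNlt : sSup ({0} ∪ {x : ℝ | ∃ s : ℝ, 0 < s ∧ s < t ∧
        x = s ^ (1 - β + σ) * ‖f N t - f N s‖ / (t - s) ^ σ}) < ε / 3 := by
      have := hwt
      rw [Real.dist_eq, sub_zero] at this
      exact lt_of_le_of_lt (le_abs_self _) this
    have hnn : (0:ℝ) ≤ sSup ({0} ∪ {x : ℝ | ∃ s : ℝ, 0 < s ∧ s < t ∧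
        x = s ^ (1 - β + σ) * ‖g t - g s‖ / (t - s) ^ σ}) := by
      apply Real.sSup_nonneg
      rintro x (hx | ⟨s, hs, hst, rfl⟩)
      · rw [Set.mem_singleton_iff] at hx; subst hx; exact le_refl 0
      · exact div_nonneg (mul_nonneg (Real.rpow_nonneg hs.le _) (norm_nonneg _))
          (Real.rpow_nonneg (by linarith) _)
    have hub : sSup ({0} ∪ {x : ℝ | ∃ s : ℝ, 0 < s ∧ s < t ∧
        x = s ^ (1 - β + σ) * ‖g t - g s‖ / (t - s) ^ σ}) ≤ 2 * ε / 3 := by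
      apply Real.sSup_le ?_ (by linarith)
      rintro x (hx | ⟨s, hs, hst, rfl⟩)
      · rw [Set.mem_singleton_iff] at hx; subst hx; linarith
      · have h1 : s ^ (1 - β + σ) * ‖f N t - f N s‖ / (t - s) ^ σ ≤
            sSup ({0} ∪ {x : ℝ | ∃ s : ℝ, 0 < s ∧ s < t ∧
              x = s ^ (1 - β + σ) * ‖f N t - f N s‖ / (t - s) ^ σ}) :=
          le_csSup hWNb (Or.inr ⟨s, hs, hst, rfl⟩)
        have h2 : s ^ (1 - β + σ) * ‖(f N t - g t) - (f N s - g s)‖ / (t - s) ^ σ ≤ ε / 3 :=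
          (hN N le_rfl).2 s t hs hst ht.2
        have h3 := hquot N s t hs hst
        linarith
    rw [Real.dist_eq, sub_zero, abs_of_nonneg hnn]
    linarith
  exact ⟨g, ⟨hgcont, ⟨L, hGlim⟩, hgbdd2, hwg⟩, hD⟩
end

section
/- Let 0 < σ < β ≤ 1 and let 0 < s < t be real numbers. Then (t-s) · ∫_{s/2}^s (t-s+u)^{-1} u^{σ-1} (s-u)^{β-σ-1} du ≤ (2/(β-σ)) · (t-s)^σ · s^{β-σ-1}. -/
open MeasureTheory Set

lemma key_pointwise_J22 (σ s t u : ℝ) (hσ : 0 < σ) (hσ1 : σ ≤ 1)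
    (hs : 0 < s) (hst : s < t) (hu1 : s / 2 < u) (hu2 : u < s) :
    (t - s) * ((t - s + u)⁻¹ * u ^ (σ - 1)) ≤ (t - s) ^ σ * (2 / s) := by
  have hA : 0 < t - s := by linarith
  have hu : 0 < u := by linarith
  have hB : 0 < t - s + u := by linarith
  have h1 : (t - s) / (t - s + u) ≤ ((t - s) / u) ^ σ := by
    rcases le_total (t - s) u with h | h
    · have hx0 : 0 < (t - s) / u := div_pos hA hu
      have hx1 : (t - s) / u ≤ 1 := (div_le_one hu).mpr h
      calc (t - s) / (t - s + u) ≤ (t - s) / u := by gcongr; linarith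
        _ = ((t - s) / u) ^ (1 : ℝ) := (Real.rpow_one _).symm
        _ ≤ ((t - s) / u) ^ σ :=
            Real.rpow_le_rpow_of_exponent_ge hx0 hx1 hσ1
    · have hx1 : (1 : ℝ) ≤ (t - s) / u := (one_le_div hu).mpr h
      calc (t - s) / (t - s + u) ≤ 1 := by
            rw [div_le_one hB]; linarith
        _ ≤ ((t - s) / u) ^ σ := Real.one_le_rpow hx1 hσ.le
  have h2 : ((t - s) / u) ^ σ * u ^ (σ - 1) = (t - s) ^ σ / u := by
    rw [Real.div_rpow hA.le hu.le, Real.rpow_sub_one hu.ne']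
    field_simp
  calc (t - s) * ((t - s + u)⁻¹ * u ^ (σ - 1))
      = ((t - s) / (t - s + u)) * u ^ (σ - 1) := by ring
    _ ≤ ((t - s) / u) ^ σ * u ^ (σ - 1) := by
        have hnn : 0 ≤ u ^ (σ - 1) := Real.rpow_nonneg hu.le _
        exact mul_le_mul_of_nonneg_right h1 hnn
    _ = (t - s) ^ σ / u := h2
    _ ≤ (t - s) ^ σ * (2 / s) := by
        rw [div_eq_mul_inv]
        have h3 : u⁻¹ ≤ 2 / s := by
          rw [← inv_div s 2]
          exact inv_anti₀ (by positivity) hu1.le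
        exact mul_le_mul_of_nonneg_left h3 (Real.rpow_nonneg hA.le _)

/-- For `0 < σ < β ≤ 1` and `0 < s < t`,
`(t-s) ∫_{s/2}^s (t-s+u)^{-1} u^{σ-1} (s-u)^{β-σ-1} du ≤ (2/(β-σ)) (t-s)^σ s^{β-σ-1}`.
The integral is a Lebesgue integral of a nonnegative function. -/
theorem upper_half_estimate_J22 (σ β s t : ℝ) (hσ : 0 < σ) (hσβ : σ < β) (hβ : β ≤ 1)
    (hs : 0 < s) (hst : s < t) :
    ENNReal.ofReal (t - s) *
        ∫⁻ u in Set.Ioo (s / 2) s,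
          ENNReal.ofReal ((t - s + u)⁻¹ * u ^ (σ - 1) * (s - u) ^ (β - σ - 1)) ≤
      ENNReal.ofReal (2 / (β - σ) * (t - s) ^ σ * s ^ (β - σ - 1)) := by
  set r := β - σ - 1 with hrdef
  have hrβ : 0 < β - σ := by linarith
  have hr1 : -1 < r := by simp [hrdef]; linarith
  have hA : 0 < t - s := by linarith
  have hσ1 : σ ≤ 1 := hσβ.le.trans hβ
  have hmeas : MeasurableSet (Ioo (s / 2) s) := measurableSet_Ioo
  rw [← lintegral_const_mul' _ _ ENNReal.ofReal_ne_top]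
  have step1 : (∫⁻ u in Ioo (s / 2) s, ENNReal.ofReal (t - s) *
        ENNReal.ofReal ((t - s + u)⁻¹ * u ^ (σ - 1) * (s - u) ^ r))
      ≤ ∫⁻ u in Ioo (s / 2) s,
        ENNReal.ofReal ((t - s) ^ σ * (2 / s)) * ENNReal.ofReal ((s - u) ^ r) := by
    apply setLIntegral_mono' hmeas
    intro u hu
    rw [← ENNReal.ofReal_mul hA.le, ← ENNReal.ofReal_mul (by positivity)]
    apply ENNReal.ofReal_le_ofReal
    have hkey := key_pointwise_J22 σ s t u hσ hσ1 hs hst hu.1 hu.2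
    have hsu : 0 ≤ (s - u) ^ r := Real.rpow_nonneg (by linarith [hu.2]) r
    calc (t - s) * ((t - s + u)⁻¹ * u ^ (σ - 1) * (s - u) ^ r)
        = ((t - s) * ((t - s + u)⁻¹ * u ^ (σ - 1))) * (s - u) ^ r := by ring
      _ ≤ ((t - s) ^ σ * (2 / s)) * (s - u) ^ r :=
          mul_le_mul_of_nonneg_right hkey hsu
  refine step1.trans ?_
  rw [lintegral_const_mul' _ _ ENNReal.ofReal_ne_top]
  -- integrability
  have hint : IntervalIntegrable (fun u => (s - u) ^ r) volume (s / 2) s := by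
    have h0 : IntervalIntegrable (fun x : ℝ => x ^ r) volume 0 (s / 2) :=
      intervalIntegral.intervalIntegrable_rpow' hr1
    have h1 := h0.comp_sub_left s
    have h2 : IntervalIntegrable (fun x => (s - x) ^ r) volume (s - s / 2) s := by
      simpa using h1.symm
    have h3 : s - s / 2 = s / 2 := by ring
    rwa [h3] at h2
  have hIoo : IntegrableOn (fun u => (s - u) ^ r) (Ioo (s / 2) s) volume := by
    have := (intervalIntegrable_iff_integrableOn_Ioc_of_le (by linarith : s / 2 ≤ s)).mp hint
    exact this.mono_set Ioo_subset_Ioc_self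
  have heq : (∫⁻ u in Ioo (s / 2) s, ENNReal.ofReal ((s - u) ^ r))
      = ENNReal.ofReal (∫ u in Ioo (s / 2) s, (s - u) ^ r) := by
    rw [← ofReal_integral_eq_lintegral_ofReal hIoo]
    filter_upwards [ae_restrict_mem hmeas] with u hu
    exact Real.rpow_nonneg (by linarith [hu.2]) r
  rw [heq]
  have hval : (∫ u in Ioo (s / 2) s, (s - u) ^ r) = (s / 2) ^ (β - σ) / (β - σ) := by
    rw [← integral_Ioc_eq_integral_Ioo,
        ← intervalIntegral.integral_of_le (by linarith : s / 2 ≤ s)]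
    have := intervalIntegral.integral_comp_sub_left (fun x : ℝ => x ^ r) s (a := s / 2) (b := s)
    rw [this, show s - s = 0 by ring, show s - s / 2 = s / 2 by ring]
    rw [integral_rpow (Or.inl hr1)]
    rw [Real.zero_rpow (by simp only [hrdef]; intro h; linarith [h] : r + 1 ≠ 0)]
    have h4 : r + 1 = β - σ := by simp only [hrdef]; ring
    rw [h4]
    ring
  rw [hval, ← ENNReal.ofReal_mul (by positivity)]
  apply ENNReal.ofReal_le_ofReal
  have hle : (s / 2) ^ (β - σ) ≤ s ^ (β - σ) :=
    Real.rpow_le_rpow (by linarith) (by linarith) hrβ.le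
  have hss : s ^ (β - σ - 1) = s ^ (β - σ) / s := Real.rpow_sub_one hs.ne' _
  calc (t - s) ^ σ * (2 / s) * ((s / 2) ^ (β - σ) / (β - σ))
      ≤ (t - s) ^ σ * (2 / s) * (s ^ (β - σ) / (β - σ)) := by
        gcongr
    _ = 2 / (β - σ) * (t - s) ^ σ * s ^ (β - σ - 1) := by
        rw [hss]; field_simp
end

section
/- Let 0 < σ < β ≤ 1 and let 0 < s < t be real numbers. Then (t-s) · ∫_0^{s/2} (t-s+u)^{-1} u^{σ-1} (s-u)^{β-σ-1} du ≤ 2^{1-β+σ} · (∫_0^∞ (1+r)^{-1} r^{σ-1} dr) · s^{β-σ-1} · (t-s)^σ, where the improper integral ∫_0^∞ (1+r)^{-1} r^{σ-1} dr is finite since 0 < σ < 1. -/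
open MeasureTheory Set

/-- For `0 < σ < β ≤ 1` and `0 < s < t`,
`(t-s) ∫_0^{s/2} (t-s+u)^{-1} u^{σ-1} (s-u)^{β-σ-1} du
  ≤ 2^{1-β+σ} (∫_0^∞ (1+r)^{-1} r^{σ-1} dr) s^{β-σ-1} (t-s)^σ`,
where the improper integral `∫_0^∞ (1+r)^{-1} r^{σ-1} dr` is finite since `0 < σ < 1`.
All integrals are Lebesgue integrals of nonnegative functions. -/
theorem lower_half_estimate_J22 (σ β s t : ℝ) (hσ : 0 < σ) (hσβ : σ < β) (hβ : β ≤ 1)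
    (hs : 0 < s) (hst : s < t) :
    (∫⁻ r in Set.Ioi (0 : ℝ), ENNReal.ofReal ((1 + r)⁻¹ * r ^ (σ - 1))) ≠ ⊤ ∧
    ENNReal.ofReal (t - s) *
        ∫⁻ u in Set.Ioo 0 (s / 2),
          ENNReal.ofReal ((t - s + u)⁻¹ * u ^ (σ - 1) * (s - u) ^ (β - σ - 1)) ≤
      ENNReal.ofReal ((2 : ℝ) ^ (1 - β + σ)) *
        (∫⁻ r in Set.Ioi (0 : ℝ), ENNReal.ofReal ((1 + r)⁻¹ * r ^ (σ - 1))) *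
        ENNReal.ofReal (s ^ (β - σ - 1) * (t - s) ^ σ) := by
  have hc : (0 : ℝ) < t - s := sub_pos.2 hst
  have hβσ : β - σ - 1 ≤ 0 := by linarith
  constructor
  · -- finiteness of the improper integral
    rw [← Ioc_union_Ioi_eq_Ioi (zero_le_one (α := ℝ)),
      lintegral_union measurableSet_Ioi (Ioc_disjoint_Ioi le_rfl)]
    refine ENNReal.add_ne_top.2 ⟨?_, ?_⟩
    · have hint : IntegrableOn (fun r : ℝ => r ^ (σ - 1)) (Ioc 0 1) := by
        have h := intervalIntegral.intervalIntegrable_rpow'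
          (a := (0 : ℝ)) (b := 1) (r := σ - 1) (by linarith)
        rwa [intervalIntegrable_iff_integrableOn_Ioc_of_le zero_le_one] at h
      refine ne_of_lt (lt_of_le_of_lt ?_ hint.lintegral_lt_top)
      refine setLIntegral_mono' measurableSet_Ioc fun r hr => ?_
      refine ENNReal.ofReal_le_ofReal ?_
      have h1 : (1 + r)⁻¹ ≤ 1 := by
        rw [inv_le_one₀ (by linarith [hr.1])]; linarith [hr.1]
      exact mul_le_of_le_one_left (Real.rpow_nonneg hr.1.le _) h1
    · have hint : IntegrableOn (fun r : ℝ => r ^ (σ - 2)) (Ioi 1) :=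
        integrableOn_Ioi_rpow_of_lt (by linarith) one_pos
      refine ne_of_lt (lt_of_le_of_lt ?_ hint.lintegral_lt_top)
      refine setLIntegral_mono' measurableSet_Ioi fun r hr => ?_
      refine ENNReal.ofReal_le_ofReal ?_
      have hr1 : (1 : ℝ) < r := hr
      have hr0 : (0 : ℝ) < r := by linarith
      have h1 : (1 + r)⁻¹ ≤ r⁻¹ := by
        apply inv_anti₀ hr0; linarith
      have h2 : r⁻¹ * r ^ (σ - 1) = r ^ (σ - 2) := by
        rw [← Real.rpow_neg_one r, ← Real.rpow_add hr0]; ring_nf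
      calc (1 + r)⁻¹ * r ^ (σ - 1) ≤ r⁻¹ * r ^ (σ - 1) :=
            mul_le_mul_of_nonneg_right h1 (Real.rpow_nonneg hr0.le _)
        _ = r ^ (σ - 2) := h2
  · -- the main estimate
    set c := t - s with hcdef
    set I := ∫⁻ r in Ioi (0 : ℝ), ENNReal.ofReal ((1 + r)⁻¹ * r ^ (σ - 1)) with hI
    set g : ℝ → ENNReal :=
      fun u => ENNReal.ofReal ((c + u)⁻¹ * u ^ (σ - 1) * (s - u) ^ (β - σ - 1)) with hgdef
    have hT : Measurable fun r : ℝ => c * r := measurable_const_mul c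
    have hg : Measurable g := by
      apply ENNReal.measurable_ofReal.comp
      fun_prop
    have key : (∫⁻ u in Ioo 0 (s / 2), g u)
        = ENNReal.ofReal c * ∫⁻ r in Ioo 0 (s / 2 / c), g (c * r) := by
      have h1 : (volume : Measure ℝ).restrict (Ioo 0 (s / 2))
          = ENNReal.ofReal c •
            ((Measure.map (fun r : ℝ => c * r) volume).restrict (Ioo 0 (s / 2))) := by
        rw [← Measure.restrict_smul]
        congr 1
        have := Real.smul_map_volume_mul_left (a := c) hc.ne'
        rw [abs_of_pos hc] at this
        exact this.symm
      rw [h1, lintegral_smul_measure,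
        Measure.restrict_map hT measurableSet_Ioo, lintegral_map hg hT,
        preimage_const_mul_Ioo₀ _ _ hc, zero_div, smul_eq_mul]
    have hbound : ∀ r ∈ Ioo (0 : ℝ) (s / 2 / c),
        g (c * r) ≤ ENNReal.ofReal (c ^ (σ - 2) * (s / 2) ^ (β - σ - 1)) *
          ENNReal.ofReal ((1 + r)⁻¹ * r ^ (σ - 1)) := by
      intro r hr
      have hr0 : (0 : ℝ) < r := hr.1
      have hrc : c * r < s / 2 := by
        have := (lt_div_iff₀ hc).1 hr.2
        linarith [this]
      rw [hgdef, ← ENNReal.ofReal_mul (by positivity)]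
      apply ENNReal.ofReal_le_ofReal
      have e1 : (c + c * r)⁻¹ * (c * r) ^ (σ - 1)
          = c ^ (σ - 2) * ((1 + r)⁻¹ * r ^ (σ - 1)) := by
        have hcc : c ^ (σ - 2) = c⁻¹ * c ^ (σ - 1) := by
          rw [← Real.rpow_neg_one c, ← Real.rpow_add hc]; congr 1; ring
        rw [show c + c * r = c * (1 + r) by ring, mul_inv,
          Real.mul_rpow hc.le hr0.le, hcc]
        ring
      have e2 : (s - c * r) ^ (β - σ - 1) ≤ (s / 2) ^ (β - σ - 1) :=
        Real.rpow_le_rpow_of_nonpos (by positivity) (by linarith) hβσ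
      calc (c + c * r)⁻¹ * (c * r) ^ (σ - 1) * (s - c * r) ^ (β - σ - 1)
          = c ^ (σ - 2) * ((1 + r)⁻¹ * r ^ (σ - 1)) * (s - c * r) ^ (β - σ - 1) := by
            rw [e1]
        _ ≤ c ^ (σ - 2) * ((1 + r)⁻¹ * r ^ (σ - 1)) * (s / 2) ^ (β - σ - 1) := by
            apply mul_le_mul_of_nonneg_left e2 (by positivity)
        _ = c ^ (σ - 2) * (s / 2) ^ (β - σ - 1) * ((1 + r)⁻¹ * r ^ (σ - 1)) := by ring
    have hreal : c * (c * (c ^ (σ - 2) * (s / 2) ^ (β - σ - 1)))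
        = (2 : ℝ) ^ (1 - β + σ) * (s ^ (β - σ - 1) * c ^ σ) := by
      have h3 : c * (c * c ^ (σ - 2)) = c ^ σ := by
        conv_rhs => rw [show σ = 1 + (1 + (σ - 2)) by ring]
        rw [Real.rpow_add hc, Real.rpow_add hc, Real.rpow_one]
      have h2 : (s / 2) ^ (β - σ - 1) = (2 : ℝ) ^ (1 - β + σ) * s ^ (β - σ - 1) := by
        rw [div_eq_mul_inv, Real.mul_rpow hs.le (by positivity),
          Real.inv_rpow (by norm_num), ← Real.rpow_neg (by norm_num)]
        rw [show -(β - σ - 1) = 1 - β + σ by ring]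
        ring
      rw [h2, ← h3]; ring
    calc ENNReal.ofReal c * ∫⁻ u in Ioo 0 (s / 2), g u
        = ENNReal.ofReal c *
            (ENNReal.ofReal c * ∫⁻ r in Ioo 0 (s / 2 / c), g (c * r)) := by rw [key]
      _ ≤ ENNReal.ofReal c * (ENNReal.ofReal c *
            ∫⁻ r in Ioo 0 (s / 2 / c),
              ENNReal.ofReal (c ^ (σ - 2) * (s / 2) ^ (β - σ - 1)) *
                ENNReal.ofReal ((1 + r)⁻¹ * r ^ (σ - 1))) := by
          refine mul_le_mul_right (mul_le_mul_right ?_ _) _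
          exact setLIntegral_mono' measurableSet_Ioo hbound
      _ = ENNReal.ofReal c * (ENNReal.ofReal c *
            (ENNReal.ofReal (c ^ (σ - 2) * (s / 2) ^ (β - σ - 1)) *
              ∫⁻ r in Ioo 0 (s / 2 / c), ENNReal.ofReal ((1 + r)⁻¹ * r ^ (σ - 1)))) := by
          rw [lintegral_const_mul' _ _ ENNReal.ofReal_ne_top]
      _ ≤ ENNReal.ofReal c * (ENNReal.ofReal c *
            (ENNReal.ofReal (c ^ (σ - 2) * (s / 2) ^ (β - σ - 1)) * I)) := by
          refine mul_le_mul_right (mul_le_mul_right (mul_le_mul_right ?_ _) _) _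
          exact lintegral_mono_set fun x hx => hx.1
      _ = ENNReal.ofReal (c * (c * (c ^ (σ - 2) * (s / 2) ^ (β - σ - 1)))) * I := by
          rw [ENNReal.ofReal_mul hc.le, ENNReal.ofReal_mul hc.le]; ring
      _ = ENNReal.ofReal ((2 : ℝ) ^ (1 - β + σ) * (s ^ (β - σ - 1) * c ^ σ)) * I := by
          rw [hreal]
      _ = ENNReal.ofReal ((2 : ℝ) ^ (1 - β + σ)) * I *
            ENNReal.ofReal (s ^ (β - σ - 1) * c ^ σ) := by
          rw [ENNReal.ofReal_mul (by positivity)]; ring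
end

section
/- Let 0 < σ < β ≤ 1. There exists a constant C > 0, depending only on σ and β, such that for all real numbers 0 < s < t, (t-s) · ∫_0^s (t-s+u)^{-1} u^{σ-1} (s-u)^{β-σ-1} du ≤ C · s^{β-σ-1} · (t-s)^σ. -/
open MeasureTheory Set

/-- Part A kernel estimate: `∫_0^∞ δ (δ+u)⁻¹ u^{σ-1} du ≤ (1/σ + 1/(1-σ)) δ^σ`. -/
lemma partA_kernel (σ : ℝ) (hσ : 0 < σ) (hσ1 : σ < 1) (δ : ℝ) (hδ : 0 < δ) :
    ∫⁻ u in Set.Ioi (0:ℝ), ENNReal.ofReal (δ * (δ + u)⁻¹ * u ^ (σ - 1)) ≤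
      ENNReal.ofReal ((1/σ + 1/(1-σ)) * δ ^ σ) := by
  have hsplit : Set.Ioi (0:ℝ) = Set.Ioc 0 δ ∪ Set.Ioi δ := (Set.Ioc_union_Ioi_eq_Ioi hδ.le).symm
  rw [hsplit, lintegral_union measurableSet_Ioi (Set.Ioc_disjoint_Ioi le_rfl)]
  have h1 : ∫⁻ u in Set.Ioc (0:ℝ) δ, ENNReal.ofReal (δ * (δ + u)⁻¹ * u ^ (σ - 1)) ≤
      ENNReal.ofReal (δ ^ σ / σ) := by
    have hb : ∫⁻ u in Set.Ioc (0:ℝ) δ, ENNReal.ofReal (δ * (δ + u)⁻¹ * u ^ (σ - 1)) ≤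
        ∫⁻ u in Set.Ioc (0:ℝ) δ, ENNReal.ofReal (u ^ (σ - 1)) := by
      refine setLIntegral_mono (by fun_prop) (fun u hu => ?_)
      refine ENNReal.ofReal_le_ofReal ?_
      have hu0 : 0 < u := hu.1
      have : δ * (δ + u)⁻¹ ≤ 1 := by
        rw [mul_inv_le_iff₀ (by linarith)]; linarith
      calc δ * (δ + u)⁻¹ * u ^ (σ - 1) ≤ 1 * u ^ (σ - 1) := by
            exact mul_le_mul_of_nonneg_right this (Real.rpow_nonneg hu0.le _)
        _ = u ^ (σ - 1) := one_mul _
    refine hb.trans_eq ?_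
    rw [← MeasureTheory.ofReal_integral_eq_lintegral_ofReal]
    · congr 1
      rw [← intervalIntegral.integral_of_le hδ.le, integral_rpow (Or.inl (by linarith))]
      rw [sub_add_cancel, Real.zero_rpow (by positivity)]
      ring
    · rw [show Integrable (fun u : ℝ => u ^ (σ - 1)) (volume.restrict (Ioc 0 δ)) ↔
          IntegrableOn (fun u : ℝ => u ^ (σ - 1)) (Ioc 0 δ) volume from Iff.rfl,
        ← intervalIntegrable_iff_integrableOn_Ioc_of_le hδ.le]
      exact intervalIntegral.intervalIntegrable_rpow' (by linarith)
    · filter_upwards [ae_restrict_mem measurableSet_Ioc] with u hu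
      exact Real.rpow_nonneg hu.1.le _
  have h2 : ∫⁻ u in Set.Ioi δ, ENNReal.ofReal (δ * (δ + u)⁻¹ * u ^ (σ - 1)) ≤
      ENNReal.ofReal (δ ^ σ / (1 - σ)) := by
    have hb : ∫⁻ u in Set.Ioi δ, ENNReal.ofReal (δ * (δ + u)⁻¹ * u ^ (σ - 1)) ≤
        ∫⁻ u in Set.Ioi δ, ENNReal.ofReal (δ * u ^ (σ - 2)) := by
      refine setLIntegral_mono (by fun_prop) (fun u hu => ?_)
      refine ENNReal.ofReal_le_ofReal ?_
      have hu0 : 0 < u := hδ.trans hu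
      have hinv : (δ + u)⁻¹ ≤ u⁻¹ := by
        apply inv_anti₀ hu0; linarith
      calc δ * (δ + u)⁻¹ * u ^ (σ - 1) ≤ δ * u⁻¹ * u ^ (σ - 1) := by
            apply mul_le_mul_of_nonneg_right _ (Real.rpow_nonneg hu0.le _)
            exact mul_le_mul_of_nonneg_left hinv hδ.le
        _ = δ * u ^ (σ - 2) := by
            rw [mul_assoc]
            congr 1
            rw [show (σ - 2 : ℝ) = -1 + (σ - 1) by ring, Real.rpow_add hu0,
              Real.rpow_neg_one]
    refine hb.trans_eq ?_
    rw [← MeasureTheory.ofReal_integral_eq_lintegral_ofReal]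
    · congr 1
      rw [MeasureTheory.integral_const_mul, integral_Ioi_rpow_of_lt (by linarith) hδ]
      rw [show (σ - 2 + 1 : ℝ) = σ - 1 by ring]
      rw [show δ ^ (σ - 1) = δ ^ σ / δ by
        rw [Real.rpow_sub hδ, Real.rpow_one]]
      have hδ' : δ ≠ 0 := hδ.ne'
      have h1 : σ - 1 ≠ 0 := by linarith
      have h2 : (1:ℝ) - σ ≠ 0 := by linarith
      field_simp
      ring
    · exact (integrableOn_Ioi_rpow_of_lt (by linarith) hδ).const_mul δ
    · filter_upwards [ae_restrict_mem measurableSet_Ioi] with u hu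
      have : (0:ℝ) < u := hδ.trans hu
      positivity
  calc _ ≤ ENNReal.ofReal (δ ^ σ / σ) + ENNReal.ofReal (δ ^ σ / (1 - σ)) := add_le_add h1 h2
    _ = ENNReal.ofReal ((1/σ + 1/(1-σ)) * δ ^ σ) := by
        rw [← ENNReal.ofReal_add (by positivity) (by
          have : (0:ℝ) < 1 - σ := by linarith
          positivity)]
        congr 1
        field_simp

/-- Part B kernel: `∫_m^s (s-u)^c du = (s-m)^{c+1}/(c+1)` for `c > -1`, as a lintegral. -/
lemma partB_kernel (c : ℝ) (hc : -1 < c) (m s : ℝ) (hm : m < s) :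
    ∫⁻ u in Set.Ico m s, ENNReal.ofReal ((s - u) ^ c) =
      ENNReal.ofReal ((s - m) ^ (c + 1) / (c + 1)) := by
  have hii : IntervalIntegrable (fun u : ℝ => (s - u) ^ c) volume m s := by
    have := (intervalIntegral.intervalIntegrable_rpow' hc (a := s - s) (b := s - m)).comp_sub_left s
    exact (by simpa using this : IntervalIntegrable _ volume s m).symm
  rw [Measure.restrict_congr_set Ico_ae_eq_Ioc,
    ← MeasureTheory.ofReal_integral_eq_lintegral_ofReal]
  · congr 1
    rw [← intervalIntegral.integral_of_le hm.le,
      intervalIntegral.integral_comp_sub_left (fun v : ℝ => v ^ c) s, sub_self,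
      integral_rpow (Or.inl hc), Real.zero_rpow (by linarith)]
    ring
  · rw [show Integrable (fun u : ℝ => (s - u) ^ c) (volume.restrict (Ioc m s)) ↔
        IntegrableOn (fun u : ℝ => (s - u) ^ c) (Ioc m s) volume from Iff.rfl,
      ← intervalIntegrable_iff_integrableOn_Ioc_of_le hm.le]
    exact hii
  · filter_upwards [ae_restrict_mem measurableSet_Ioc] with u hu
    exact Real.rpow_nonneg (by linarith [hu.2]) _

/-- `δ/(δ+u) ≤ (δ/u)^σ` for `0 < σ ≤ 1`, `δ, u > 0`. -/
lemma div_add_le_rpow (σ δ u : ℝ) (hσ : 0 < σ) (hσ1 : σ ≤ 1) (hδ : 0 < δ) (hu : 0 < u) :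
    δ * (δ + u)⁻¹ ≤ (δ / u) ^ σ := by
  rcases le_total δ u with h | h
  · have h1 : δ * (δ + u)⁻¹ ≤ δ / u := by
      rw [div_eq_mul_inv]
      exact mul_le_mul_of_nonneg_left (inv_anti₀ hu (by linarith)) hδ.le
    refine h1.trans ?_
    calc δ / u = (δ / u) ^ (1:ℝ) := (Real.rpow_one _).symm
      _ ≤ (δ / u) ^ σ := Real.rpow_le_rpow_of_exponent_ge (by positivity)
          (by rw [div_le_one hu]; exact h) hσ1
  · have h1 : δ * (δ + u)⁻¹ ≤ 1 := by
      rw [mul_inv_le_iff₀ (by linarith)]; linarith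
    refine h1.trans ?_
    exact Real.one_le_rpow (by rw [le_div_iff₀ hu]; linarith) hσ.le

/-- For `0 < σ < β ≤ 1` there is a constant `C > 0`, depending only on `σ` and `β`,
such that for all `0 < s < t`,
`(t-s) ∫_0^s (t-s+u)^{-1} u^{σ-1} (s-u)^{β-σ-1} du ≤ C s^{β-σ-1} (t-s)^σ`.
The integral is a Lebesgue integral of a nonnegative function. -/
theorem singular_integral_estimate_J22 (σ β : ℝ) (hσ : 0 < σ) (hσβ : σ < β) (hβ : β ≤ 1) :
    ∃ C : ℝ, 0 < C ∧ ∀ s t : ℝ, 0 < s → s < t →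
      ENNReal.ofReal (t - s) *
          ∫⁻ u in Set.Ioo 0 s,
            ENNReal.ofReal ((t - s + u)⁻¹ * u ^ (σ - 1) * (s - u) ^ (β - σ - 1)) ≤
        ENNReal.ofReal (C * s ^ (β - σ - 1) * (t - s) ^ σ) := by
  have hσ1 : σ < 1 := hσβ.trans_le hβ
  have hβσ : 0 < β - σ := by linarith
  have h1σ : 0 < 1 - σ := by linarith
  set K : ℝ := 1/σ + 1/(1-σ) + 1/(β-σ) with hK
  have hKpos : 0 < K := by positivity
  refine ⟨2 * K, by positivity, fun s t hs hst => ?_⟩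
  set δ : ℝ := t - s with hδdef
  have hδ : 0 < δ := by simp [hδdef]; linarith
  set m : ℝ := s / 2 with hmdef
  have hm0 : 0 < m := by positivity
  have hms : m < s := by simp [hmdef]; linarith
  -- pull the constant inside
  rw [← MeasureTheory.lintegral_const_mul' _ _ ENNReal.ofReal_ne_top]
  simp_rw [← ENNReal.ofReal_mul hδ.le]
  -- split the integral
  rw [show Set.Ioo (0:ℝ) s = Set.Ioo 0 m ∪ Set.Ico m s from
      (Set.Ioo_union_Ico_eq_Ioo hm0 hms.le).symm,
    lintegral_union measurableSet_Ico
      (Set.disjoint_left.mpr (fun x hx hx' => absurd hx'.1 (not_le.mpr hx.2)))]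
  -- Part A
  have hA : ∫⁻ u in Set.Ioo 0 m,
        ENNReal.ofReal (δ * ((δ + u)⁻¹ * u ^ (σ - 1) * (s - u) ^ (β - σ - 1))) ≤
      ENNReal.ofReal (m ^ (β - σ - 1) * ((1/σ + 1/(1-σ)) * δ ^ σ)) := by
    have step1 : ∫⁻ u in Set.Ioo 0 m,
          ENNReal.ofReal (δ * ((δ + u)⁻¹ * u ^ (σ - 1) * (s - u) ^ (β - σ - 1))) ≤
        ∫⁻ u in Set.Ioo 0 m,
          ENNReal.ofReal (m ^ (β - σ - 1)) * ENNReal.ofReal (δ * (δ + u)⁻¹ * u ^ (σ - 1)) := by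
      refine setLIntegral_mono (by fun_prop) (fun u hu => ?_)
      rw [← ENNReal.ofReal_mul (Real.rpow_nonneg hm0.le _)]
      refine ENNReal.ofReal_le_ofReal ?_
      have hu0 : 0 < u := hu.1
      have hsu : m ≤ s - u := by have := hu.2; simp [hmdef] at this ⊢; linarith
      have hp : (s - u) ^ (β - σ - 1) ≤ m ^ (β - σ - 1) :=
        Real.rpow_le_rpow_of_nonpos hm0 hsu (by linarith)
      have hnn : 0 ≤ δ * (δ + u)⁻¹ * u ^ (σ - 1) := by positivity
      calc δ * ((δ + u)⁻¹ * u ^ (σ - 1) * (s - u) ^ (β - σ - 1))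
          = δ * (δ + u)⁻¹ * u ^ (σ - 1) * (s - u) ^ (β - σ - 1) := by ring
        _ ≤ δ * (δ + u)⁻¹ * u ^ (σ - 1) * m ^ (β - σ - 1) :=
            mul_le_mul_of_nonneg_left hp hnn
        _ = m ^ (β - σ - 1) * (δ * (δ + u)⁻¹ * u ^ (σ - 1)) := by ring
    refine step1.trans ?_
    rw [MeasureTheory.lintegral_const_mul' _ _ ENNReal.ofReal_ne_top,
      ENNReal.ofReal_mul (Real.rpow_nonneg hm0.le _)]
    refine mul_le_mul_right ?_ _
    exact (lintegral_mono_set (fun x hx => hx.1 : Set.Ioo 0 m ⊆ Set.Ioi 0)).trans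
      (partA_kernel σ hσ hσ1 δ hδ)
  -- Part B
  have hB : ∫⁻ u in Set.Ico m s,
        ENNReal.ofReal (δ * ((δ + u)⁻¹ * u ^ (σ - 1) * (s - u) ^ (β - σ - 1))) ≤
      ENNReal.ofReal (δ ^ σ / m * (m ^ (β - σ) / (β - σ))) := by
    have step1 : ∫⁻ u in Set.Ico m s,
          ENNReal.ofReal (δ * ((δ + u)⁻¹ * u ^ (σ - 1) * (s - u) ^ (β - σ - 1))) ≤
        ∫⁻ u in Set.Ico m s,
          ENNReal.ofReal (δ ^ σ / m) * ENNReal.ofReal ((s - u) ^ (β - σ - 1)) := by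
      refine setLIntegral_mono (by fun_prop) (fun u hu => ?_)
      rw [← ENNReal.ofReal_mul (by positivity)]
      refine ENNReal.ofReal_le_ofReal ?_
      have hu0 : 0 < u := hm0.trans_le hu.1
      have hsu : 0 ≤ s - u := by linarith [hu.2]
      have h1 : δ * (δ + u)⁻¹ ≤ (δ / m) ^ σ :=
        (div_add_le_rpow σ δ u hσ hσ1.le hδ hu0).trans
          (Real.rpow_le_rpow (by positivity)
            (div_le_div_of_nonneg_left hδ.le hm0 hu.1) hσ.le)
      have h2 : u ^ (σ - 1) ≤ m ^ (σ - 1) :=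
        Real.rpow_le_rpow_of_nonpos hm0 hu.1 (by linarith)
      have hkey : (δ / m) ^ σ * m ^ (σ - 1) = δ ^ σ / m := by
        rw [Real.div_rpow hδ.le hm0.le, Real.rpow_sub hm0, Real.rpow_one]
        have : m ^ σ ≠ 0 := by positivity
        field_simp
      calc δ * ((δ + u)⁻¹ * u ^ (σ - 1) * (s - u) ^ (β - σ - 1))
          = (δ * (δ + u)⁻¹) * u ^ (σ - 1) * (s - u) ^ (β - σ - 1) := by ring
        _ ≤ (δ / m) ^ σ * m ^ (σ - 1) * (s - u) ^ (β - σ - 1) := by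
            refine mul_le_mul_of_nonneg_right ?_ (Real.rpow_nonneg hsu _)
            exact mul_le_mul h1 h2 (Real.rpow_nonneg hu0.le _) (by positivity)
        _ = δ ^ σ / m * (s - u) ^ (β - σ - 1) := by rw [hkey]
    refine step1.trans ?_
    rw [MeasureTheory.lintegral_const_mul' _ _ ENNReal.ofReal_ne_top,
      partB_kernel (β - σ - 1) (by linarith) m s hms,
      show (β - σ - 1 + 1 : ℝ) = β - σ by ring,
      show s - m = m by simp [hmdef]; ring,
      ← ENNReal.ofReal_mul (by positivity)]
  -- combine
  refine (add_le_add hA hB).trans ?_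
  rw [← ENNReal.ofReal_add (by positivity) (by positivity)]
  refine ENNReal.ofReal_le_ofReal ?_
  have hmul : m ^ (β - σ - 1) * ((1/σ + 1/(1-σ)) * δ ^ σ) + δ ^ σ / m * (m ^ (β - σ) / (β - σ))
      = m ^ (β - σ - 1) * K * δ ^ σ := by
    have h1 : m ^ (β - σ) / m = m ^ (β - σ - 1) :=
      (Real.rpow_sub_one hm0.ne' (β - σ)).symm
    have h2 : δ ^ σ / m * (m ^ (β - σ) / (β - σ)) = m ^ (β - σ - 1) * (1/(β-σ)) * δ ^ σ := by
      rw [← h1]; field_simp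
    rw [h2, hK]; ring
  rw [hmul]
  have hm2 : m ^ (β - σ - 1) ≤ 2 * s ^ (β - σ - 1) := by
    rw [hmdef, Real.div_rpow hs.le (by norm_num : (0:ℝ) ≤ 2)]
    have h2e : (1:ℝ)/2 ≤ (2:ℝ) ^ (β - σ - 1) := by
      calc (1:ℝ)/2 = (2:ℝ) ^ (-1 : ℝ) := by
            rw [Real.rpow_neg_one]; norm_num
        _ ≤ (2:ℝ) ^ (β - σ - 1) :=
          Real.rpow_le_rpow_of_exponent_le (by norm_num) (by linarith)
    calc s ^ (β - σ - 1) / (2:ℝ) ^ (β - σ - 1) ≤ s ^ (β - σ - 1) / (1/2) :=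
          div_le_div_of_nonneg_left (Real.rpow_nonneg hs.le _) (by norm_num) h2e
      _ = 2 * s ^ (β - σ - 1) := by ring
  calc m ^ (β - σ - 1) * K * δ ^ σ ≤ 2 * s ^ (β - σ - 1) * K * δ ^ σ := by
        refine mul_le_mul_of_nonneg_right (mul_le_mul_of_nonneg_right hm2 hKpos.le)
          (Real.rpow_nonneg hδ.le _)
    _ = 2 * K * s ^ (β - σ - 1) * δ ^ σ := by ring
end

section
/- Let 0 < σ < β ≤ 1. There exists a constant C > 0, depending only on σ and β, such that for all real numbers 0 < s < t, ∫_0^{t-s} ∫_0^s (r + s - u)^{-2} (s-u)^σ u^{β-σ-1} du dr ≤ C · s^{β-σ-1} · (t-s)^σ. -/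
open MeasureTheory Set

/-- Lintegral of `x ^ p` on `Ioo 0 c` for `p > -1`. -/
lemma lint_rpow_aux (p q c : ℝ) (hp : -1 < p) (hq : p + 1 = q) (hc : 0 ≤ c) :
    ∫⁻ x in Ioo 0 c, ENNReal.ofReal (x ^ p) = ENNReal.ofReal (c ^ q / q) := by
  subst hq
  rw [setLIntegral_congr Ioo_ae_eq_Ioc]
  have hint : IntegrableOn (fun x : ℝ => x ^ p) (Ioc 0 c) volume :=
    (intervalIntegral.intervalIntegrable_rpow' hp (a := 0) (b := c)).1
  have hnn : 0 ≤ᵐ[volume.restrict (Ioc 0 c)] fun x : ℝ => x ^ p := by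
    refine (ae_restrict_iff' measurableSet_Ioc).2 (Filter.Eventually.of_forall ?_)
    exact fun x hx => Real.rpow_nonneg hx.1.le _
  rw [← ofReal_integral_eq_lintegral_ofReal hint hnn]
  congr 1
  rw [← intervalIntegral.integral_of_le hc, integral_rpow (Or.inl hp)]
  rw [Real.zero_rpow (by linarith : p + 1 ≠ 0)]
  ring

/-- Lintegral bound for `(r + s - u) ^ p` on `Ico b s` for `p < -1`. -/
lemma lint_shift_aux (p q r b s : ℝ) (hp : p < -1) (hq : p + 1 = q) (hr : 0 < r)
    (hbs : b ≤ s) :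
    ∫⁻ u in Ico b s, ENNReal.ofReal ((r + s - u) ^ p) ≤ ENNReal.ofReal (r ^ q / (-q)) := by
  subst hq
  rw [setLIntegral_congr Ico_ae_eq_Ioc]
  have hcont : ContinuousOn (fun u : ℝ => (r + s - u) ^ p) (Icc b s) := by
    apply ContinuousOn.rpow_const (continuousOn_const.sub continuousOn_id)
    intro x hx
    exact Or.inl (ne_of_gt (show (0:ℝ) < r + s - x by linarith [hx.2]))
  have hint : IntegrableOn (fun u : ℝ => (r + s - u) ^ p) (Ioc b s) volume :=
    (hcont.integrableOn_Icc).mono_set Ioc_subset_Icc_self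
  have hnn : 0 ≤ᵐ[volume.restrict (Ioc b s)] fun u : ℝ => (r + s - u) ^ p := by
    refine (ae_restrict_iff' measurableSet_Ioc).2 (Filter.Eventually.of_forall ?_)
    exact fun x hx => Real.rpow_nonneg (by linarith [hx.2]) _
  rw [← ofReal_integral_eq_lintegral_ofReal hint hnn]
  apply ENNReal.ofReal_le_ofReal
  have hval : ∫ u in Ioc b s, (r + s - u) ^ p =
      ((r + s - b) ^ (p + 1) - (r + s - s) ^ (p + 1)) / (p + 1) := by
    rw [← intervalIntegral.integral_of_le hbs]
    have hcomp : (∫ u in b..s, (r + s - u) ^ p) = ∫ x in (r + s - s)..(r + s - b), x ^ p :=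
      intervalIntegral.integral_comp_sub_left (fun x => x ^ p) (r + s)
    have h0 : (0 : ℝ) ∉ Set.uIcc (r + s - s) (r + s - b) := by
      intro h
      rcases Set.mem_uIcc.1 h with ⟨h1, h2⟩ | ⟨h1, h2⟩ <;> linarith
    rw [hcomp, integral_rpow (Or.inr ⟨by linarith, h0⟩)]
  have hss : r + s - s = r := by ring
  rw [hval, hss]
  have hp1 : p + 1 < 0 := by linarith
  have hX : 0 ≤ (r + s - b) ^ (p + 1) := Real.rpow_nonneg (by linarith) _
  have heq : ((r + s - b) ^ (p + 1) - r ^ (p + 1)) / (p + 1) =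
      (r ^ (p + 1) - (r + s - b) ^ (p + 1)) / (-(p + 1)) := by
    rw [div_eq_div_iff (by linarith) (by linarith)]; ring
  rw [heq]
  exact (div_le_div_iff_of_pos_right (by linarith)).2 (by linarith)

/-- Pointwise bound used on `u ∈ (0, s/2)`. -/
lemma claimA_aux (σ s r w : ℝ) (hσ : 0 < σ) (hσ1 : σ ≤ 1) (hr : 0 < r) (hw : 0 < w)
    (hs2 : s ≤ 2 * w) (hs0 : 0 < s) :
    (r + w) ^ (-2 : ℝ) * w ^ σ ≤ 2 / s * r ^ (σ - 1) := by
  have hrw : 0 < r + w := by linarith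
  have h1 : w ^ σ ≤ (r + w) ^ σ := Real.rpow_le_rpow hw.le (by linarith) hσ.le
  have h2 : r ^ (1 - σ) ≤ (r + w) ^ (1 - σ) := Real.rpow_le_rpow hr.le (by linarith) (by linarith)
  have e1 : (r + w) ^ σ * (r + w) ^ (1 - σ) = r + w := by
    rw [← Real.rpow_add hrw]; norm_num
  have e2 : (r + w) ^ (2 : ℝ) = (r + w) * (r + w) := by
    rw [show (2 : ℝ) = (1 : ℝ) + 1 by norm_num, Real.rpow_add hrw, Real.rpow_one]
  have p1 : w ^ σ * r ^ (1 - σ) ≤ r + w := by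
    calc w ^ σ * r ^ (1 - σ) ≤ (r + w) ^ σ * (r + w) ^ (1 - σ) :=
          mul_le_mul h1 h2 (Real.rpow_nonneg hr.le _) (Real.rpow_nonneg hrw.le _)
      _ = r + w := e1
  have hkey : w ^ σ * (s * r ^ (1 - σ)) ≤ 2 * (r + w) ^ (2 : ℝ) := by
    rw [e2]
    nlinarith [Real.rpow_nonneg hw.le σ, Real.rpow_nonneg hr.le (1 - σ), p1, hrw]
  have hX : 0 < (r + w) ^ (2 : ℝ) := Real.rpow_pos_of_pos hrw _
  have hY : 0 < r ^ (1 - σ) := Real.rpow_pos_of_pos hr _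
  have hrs : r ^ (σ - 1) = (r ^ (1 - σ))⁻¹ := by
    rw [show σ - 1 = -(1 - σ) by ring, Real.rpow_neg hr.le]
  rw [Real.rpow_neg hrw.le, hrs, inv_mul_eq_div,
    show 2 / s * (r ^ (1 - σ))⁻¹ = 2 / (s * r ^ (1 - σ)) by ring,
    div_le_div_iff₀ hX (by positivity)]
  linarith [hkey]

/-- Pointwise bound used on `u ∈ [s/2, s)`. -/
lemma claimB_aux (σ β s r u : ℝ) (hσ : 0 < σ) (hσβ : σ < β) (hβ : β ≤ 1) (hr : 0 < r)
    (hs : 0 < s) (hu1 : s / 2 ≤ u) (hu2 : u < s) :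
    (r + s - u) ^ (-2 : ℝ) * (s - u) ^ σ * u ^ (β - σ - 1) ≤
      (s / 2) ^ (β - σ - 1) * (r + s - u) ^ (σ - 2) := by
  have hq : 0 < r + s - u := by linarith
  have hu0 : 0 < u := by linarith
  have h1 : (r + s - u) ^ (-2 : ℝ) * (s - u) ^ σ ≤ (r + s - u) ^ (σ - 2) := by
    have hb : (s - u) ^ σ ≤ (r + s - u) ^ σ :=
      Real.rpow_le_rpow (by linarith) (by linarith) hσ.le
    calc (r + s - u) ^ (-2 : ℝ) * (s - u) ^ σ
        ≤ (r + s - u) ^ (-2 : ℝ) * (r + s - u) ^ σ :=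
          mul_le_mul_of_nonneg_left hb (Real.rpow_nonneg hq.le _)
      _ = (r + s - u) ^ (σ - 2) := by
          rw [← Real.rpow_add hq]; congr 1; ring
  have h2 : u ^ (β - σ - 1) ≤ (s / 2) ^ (β - σ - 1) :=
    Real.rpow_le_rpow_of_nonpos (by positivity) hu1 (by linarith)
  calc (r + s - u) ^ (-2 : ℝ) * (s - u) ^ σ * u ^ (β - σ - 1)
      ≤ (r + s - u) ^ (σ - 2) * u ^ (β - σ - 1) :=
        mul_le_mul_of_nonneg_right h1 (Real.rpow_nonneg hu0.le _)
    _ ≤ (r + s - u) ^ (σ - 2) * (s / 2) ^ (β - σ - 1) :=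
        mul_le_mul_of_nonneg_left h2 (Real.rpow_nonneg hq.le _)
    _ = (s / 2) ^ (β - σ - 1) * (r + s - u) ^ (σ - 2) := by ring

/-- For `0 < σ < β ≤ 1` there is a constant `C > 0`, depending only on `σ` and `β`,
such that for all `0 < s < t`,
`∫_0^{t-s} ∫_0^s (r+s-u)^{-2} (s-u)^σ u^{β-σ-1} du dr ≤ C s^{β-σ-1} (t-s)^σ`.
The double integral is a Lebesgue integral of a nonnegative function. -/
theorem double_integral_estimate_J22 (σ β : ℝ) (hσ : 0 < σ) (hσβ : σ < β) (hβ : β ≤ 1) :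
    ∃ C : ℝ, 0 < C ∧ ∀ s t : ℝ, 0 < s → s < t →
      (∫⁻ r in Set.Ioo 0 (t - s), ∫⁻ u in Set.Ioo 0 s,
          ENNReal.ofReal ((r + s - u) ^ (-2 : ℝ) * (s - u) ^ σ * u ^ (β - σ - 1))) ≤
        ENNReal.ofReal (C * s ^ (β - σ - 1) * (t - s) ^ σ) := by
  have hσ1 : σ < 1 := lt_of_lt_of_le hσβ hβ
  have hβσ : 0 < β - σ := by linarith
  have h1σ : 0 < 1 - σ := by linarith
  refine ⟨(2 / (β - σ) + 2 / (1 - σ)) / σ,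
    div_pos (add_pos (div_pos two_pos hβσ) (div_pos two_pos h1σ)) hσ, fun s t hs hst => ?_⟩
  have ha : 0 < t - s := by linarith
  -- the constant `D s` bounding the inner integral by `D * r ^ (σ - 1)`
  set D : ℝ := 2 / s * ((s / 2) ^ (β - σ) / (β - σ)) + (s / 2) ^ (β - σ - 1) / (1 - σ) with hD_def
  have hD : 0 ≤ D :=
    add_nonneg (mul_nonneg (by positivity) (div_nonneg (Real.rpow_nonneg (by positivity) _)
      hβσ.le)) (div_nonneg (Real.rpow_nonneg (by positivity) _) h1σ.le)
  calc (∫⁻ r in Set.Ioo 0 (t - s), ∫⁻ u in Set.Ioo 0 s,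
          ENNReal.ofReal ((r + s - u) ^ (-2 : ℝ) * (s - u) ^ σ * u ^ (β - σ - 1)))
      ≤ ∫⁻ r in Set.Ioo 0 (t - s), ENNReal.ofReal (D * r ^ (σ - 1)) := by
        apply setLIntegral_mono' measurableSet_Ioo
        intro r hr
        obtain ⟨hr0, hr1⟩ := hr
        -- split the inner integral at s/2
        have hsplit : Ioo (0 : ℝ) s = Ioo 0 (s / 2) ∪ Ico (s / 2) s :=
          (Ioo_union_Ico_eq_Ioo (by linarith) (by linarith)).symm
        rw [hsplit, lintegral_union measurableSet_Ico
          (by apply Set.disjoint_left.mpr; rintro x ⟨_, h⟩ ⟨h', _⟩; linarith)]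
        have pieceA : (∫⁻ u in Ioo 0 (s / 2),
            ENNReal.ofReal ((r + s - u) ^ (-2 : ℝ) * (s - u) ^ σ * u ^ (β - σ - 1))) ≤
            ENNReal.ofReal ((2 / s * r ^ (σ - 1)) * ((s / 2) ^ (β - σ) / (β - σ))) := by
          calc (∫⁻ u in Ioo 0 (s / 2),
              ENNReal.ofReal ((r + s - u) ^ (-2 : ℝ) * (s - u) ^ σ * u ^ (β - σ - 1)))
              ≤ ∫⁻ u in Ioo 0 (s / 2),
                ENNReal.ofReal ((2 / s * r ^ (σ - 1)) * u ^ (β - σ - 1)) := by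
                apply setLIntegral_mono' measurableSet_Ioo
                intro u hu
                apply ENNReal.ofReal_le_ofReal
                apply mul_le_mul_of_nonneg_right _ (Real.rpow_nonneg hu.1.le _)
                have : r + s - u = r + (s - u) := by ring
                rw [this]
                exact claimA_aux σ s r (s - u) hσ hσ1.le hr0 (by linarith [hu.2]) 
                  (by linarith [hu.2]) hs
            _ = ENNReal.ofReal (2 / s * r ^ (σ - 1)) *
                ∫⁻ u in Ioo 0 (s / 2), ENNReal.ofReal (u ^ (β - σ - 1)) := by
                simp_rw [ENNReal.ofReal_mul (by positivity : (0:ℝ) ≤ 2 / s * r ^ (σ - 1))]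
                rw [lintegral_const_mul' _ _ ENNReal.ofReal_ne_top]
            _ = ENNReal.ofReal (2 / s * r ^ (σ - 1)) *
                ENNReal.ofReal ((s / 2) ^ (β - σ) / (β - σ)) := by
                rw [lint_rpow_aux (β - σ - 1) (β - σ) (s / 2) (by linarith) (by ring)
                  (by positivity)]
            _ = ENNReal.ofReal ((2 / s * r ^ (σ - 1)) * ((s / 2) ^ (β - σ) / (β - σ))) := by
                rw [← ENNReal.ofReal_mul (by positivity)]
        have pieceB : (∫⁻ u in Ico (s / 2) s,
            ENNReal.ofReal ((r + s - u) ^ (-2 : ℝ) * (s - u) ^ σ * u ^ (β - σ - 1))) ≤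
            ENNReal.ofReal ((s / 2) ^ (β - σ - 1) * (r ^ (σ - 1) / (1 - σ))) := by
          calc (∫⁻ u in Ico (s / 2) s,
              ENNReal.ofReal ((r + s - u) ^ (-2 : ℝ) * (s - u) ^ σ * u ^ (β - σ - 1)))
              ≤ ∫⁻ u in Ico (s / 2) s,
                ENNReal.ofReal ((s / 2) ^ (β - σ - 1) * (r + s - u) ^ (σ - 2)) := by
                apply setLIntegral_mono' measurableSet_Ico
                intro u hu
                exact ENNReal.ofReal_le_ofReal
                  (claimB_aux σ β s r u hσ hσβ hβ hr0 hs hu.1 hu.2)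
            _ = ENNReal.ofReal ((s / 2) ^ (β - σ - 1)) *
                ∫⁻ u in Ico (s / 2) s, ENNReal.ofReal ((r + s - u) ^ (σ - 2)) := by
                simp_rw [ENNReal.ofReal_mul (by positivity : (0:ℝ) ≤ (s / 2) ^ (β - σ - 1))]
                rw [lintegral_const_mul' _ _ ENNReal.ofReal_ne_top]
            _ ≤ ENNReal.ofReal ((s / 2) ^ (β - σ - 1)) *
                ENNReal.ofReal (r ^ (σ - 1) / (-(σ - 1))) := by
                exact mul_le_mul_right
                  (lint_shift_aux (σ - 2) (σ - 1) r (s / 2) s (by linarith) (by ring) hr0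
                    (by linarith)) _
            _ = ENNReal.ofReal ((s / 2) ^ (β - σ - 1) * (r ^ (σ - 1) / (1 - σ))) := by
                rw [neg_sub, ← ENNReal.ofReal_mul (by positivity)]
        calc (∫⁻ u in Ioo 0 (s / 2),
            ENNReal.ofReal ((r + s - u) ^ (-2 : ℝ) * (s - u) ^ σ * u ^ (β - σ - 1))) +
            ∫⁻ u in Ico (s / 2) s,
            ENNReal.ofReal ((r + s - u) ^ (-2 : ℝ) * (s - u) ^ σ * u ^ (β - σ - 1))
            ≤ ENNReal.ofReal ((2 / s * r ^ (σ - 1)) * ((s / 2) ^ (β - σ) / (β - σ))) +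
              ENNReal.ofReal ((s / 2) ^ (β - σ - 1) * (r ^ (σ - 1) / (1 - σ))) :=
              add_le_add pieceA pieceB
          _ = ENNReal.ofReal ((2 / s * r ^ (σ - 1)) * ((s / 2) ^ (β - σ) / (β - σ)) +
              (s / 2) ^ (β - σ - 1) * (r ^ (σ - 1) / (1 - σ))) := by
              rw [← ENNReal.ofReal_add
                (mul_nonneg (by positivity)
                  (div_nonneg (Real.rpow_nonneg (by positivity) _) hβσ.le))
                (mul_nonneg (Real.rpow_nonneg (by positivity) _)
                  (div_nonneg (Real.rpow_nonneg (by positivity) _) h1σ.le))]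
          _ ≤ ENNReal.ofReal (D * r ^ (σ - 1)) := by
              apply ENNReal.ofReal_le_ofReal
              rw [hD_def]; ring_nf; exact le_refl _
    _ = ENNReal.ofReal D * ∫⁻ r in Set.Ioo 0 (t - s), ENNReal.ofReal (r ^ (σ - 1)) := by
        simp_rw [ENNReal.ofReal_mul hD]
        rw [lintegral_const_mul' _ _ ENNReal.ofReal_ne_top]
    _ = ENNReal.ofReal D * ENNReal.ofReal ((t - s) ^ σ / σ) := by
        rw [lint_rpow_aux (σ - 1) σ (t - s) (by linarith) (by ring) ha.le]
    _ = ENNReal.ofReal (D * ((t - s) ^ σ / σ)) := by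
        rw [← ENNReal.ofReal_mul hD]
    _ ≤ ENNReal.ofReal ((2 / (β - σ) + 2 / (1 - σ)) / σ * s ^ (β - σ - 1) * (t - s) ^ σ) := by
        apply ENNReal.ofReal_le_ofReal
        have e : s ^ (β - σ - 1) = s ^ (β - σ) / s := by
          rw [Real.rpow_sub hs, Real.rpow_one]
        have s1 : 2 / s * ((s / 2) ^ (β - σ) / (β - σ)) ≤ 2 / (β - σ) * s ^ (β - σ - 1) := by
          have m : (s / 2) ^ (β - σ) ≤ s ^ (β - σ) :=
            Real.rpow_le_rpow (by positivity) (by linarith) (by linarith)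
          rw [e]
          calc 2 / s * ((s / 2) ^ (β - σ) / (β - σ)) ≤ 2 / s * (s ^ (β - σ) / (β - σ)) := by
                apply mul_le_mul_of_nonneg_left _ (by positivity)
                exact (div_le_div_iff_of_pos_right hβσ).2 m
            _ = 2 / (β - σ) * (s ^ (β - σ) / s) := by ring
        have s2 : (s / 2) ^ (β - σ - 1) / (1 - σ) ≤ 2 / (1 - σ) * s ^ (β - σ - 1) := by
          have key : (s / 2) ^ (β - σ - 1) ≤ 2 * s ^ (β - σ - 1) := by
            have e2 : (s / 2) ^ (β - σ - 1) = s ^ (β - σ - 1) * (2 : ℝ) ^ (-(β - σ - 1)) := by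
              rw [show s / 2 = s * 2⁻¹ by ring,
                Real.mul_rpow hs.le (by norm_num : (0:ℝ) ≤ 2⁻¹),
                Real.inv_rpow (by norm_num : (0:ℝ) ≤ 2), ← Real.rpow_neg (by norm_num)]
            have e3 : (2 : ℝ) ^ (-(β - σ - 1)) ≤ 2 := by
              calc (2 : ℝ) ^ (-(β - σ - 1)) ≤ (2 : ℝ) ^ (1 : ℝ) :=
                    Real.rpow_le_rpow_of_exponent_le (by norm_num) (by linarith)
                _ = 2 := Real.rpow_one 2
            calc (s / 2) ^ (β - σ - 1) = s ^ (β - σ - 1) * (2 : ℝ) ^ (-(β - σ - 1)) := e2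
              _ ≤ s ^ (β - σ - 1) * 2 :=
                  mul_le_mul_of_nonneg_left e3 (Real.rpow_nonneg hs.le _)
              _ = 2 * s ^ (β - σ - 1) := by ring
          calc (s / 2) ^ (β - σ - 1) / (1 - σ) ≤ 2 * s ^ (β - σ - 1) / (1 - σ) :=
                (div_le_div_iff_of_pos_right (by linarith)).2 key
            _ = 2 / (1 - σ) * s ^ (β - σ - 1) := by ring
        have hD' : D ≤ (2 / (β - σ) + 2 / (1 - σ)) * s ^ (β - σ - 1) := by
          rw [hD_def]; linarith
        calc D * ((t - s) ^ σ / σ)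
            ≤ ((2 / (β - σ) + 2 / (1 - σ)) * s ^ (β - σ - 1)) * ((t - s) ^ σ / σ) :=
              mul_le_mul_of_nonneg_right hD' (by positivity)
          _ = (2 / (β - σ) + 2 / (1 - σ)) / σ * s ^ (β - σ - 1) * (t - s) ^ σ := by ring
end
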